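/- arXiv:1302.5928 — 2 statements merged into one kernel-verified Lean document; each statement's English description precedes it below -/
import Mathlib

section
/- For every real t > 0, t/(1/4 + t²) + ∑_{n=1}^∞ t/((n + 1/2)² + t²) = (π/2)·tanh(π t). -/
/-!
Take the imaginary part of the Mittag-Leffler expansion
`π cot (π x) - 1 / x = ∑ₙ (1 / (x - (n + 1)) + 1 / (x + (n + 1)))` at `x = 1/2 - i t`.
There `cot (π x) = tan (i π t) = i tanh (π t)`, and the `n`-th pair of terms contributes
`f n + f (n + 1)` with `f n = t / ((n + 1/2)² + t²)`, so every `f (n + 1)` is counted twice.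
-/

open Real Complex

lemma Complex.mem_integerComplement_of_im_ne_zero {x : ℂ} (hx : x.im ≠ 0) :
    x ∈ integerComplement := by
  rintro ⟨n, rfl⟩
  simp at hx

lemma Complex.hasSum_cotTerm {x : ℂ} (hx : x ∈ integerComplement) :
    HasSum (cotTerm x) (π * cot (π * x) - 1 / x) := by
  rw [cot_series_rep' hx]
  exact (summable_cotTerm hx).hasSum

lemma Complex.cot_pi_div_two_sub (z : ℂ) : cot (π / 2 - z) = tan z := by
  rw [cot_eq_cos_div_sin, tan_eq_sin_div_cos, cos_pi_div_two_sub, sin_pi_div_two_sub]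

lemma Complex.one_div_sub_mul_I_im (a t : ℝ) :
    (1 / ((a : ℂ) - t * I)).im = t / (a ^ 2 + t ^ 2) := by
  simp [normSq_apply]
  ring

lemma HasSum.succ_of_add_succ {f : ℕ → ℝ} {a : ℝ} (hf : ∀ n, 0 ≤ f n)
    (h : HasSum (fun n ↦ f n + f (n + 1)) a) : HasSum (fun n ↦ f (n + 1)) ((a - f 0) / 2) := by
  have hf_summable : Summable f :=
    .of_nonneg_of_le hf (fun n ↦ le_add_of_nonneg_right (hf _)) h.summable
  have hsucc := (hasSum_nat_add_iff' 1).mpr hf_summable.hasSum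
  rw [Finset.sum_range_one] at hsucc
  have hval := h.unique (hf_summable.hasSum.add hsucc)
  rwa [show (a - f 0) / 2 = ∑' n, f n - f 0 by linarith]

theorem hasSum_pi_mul_tanh (t : ℝ) (ht : 0 < t) :
    HasSum (fun n : ℕ ↦
        t / (((n : ℝ) + 1 / 2) ^ 2 + t ^ 2) + t / ((((n + 1 : ℕ) : ℝ) + 1 / 2) ^ 2 + t ^ 2))
      (π * Real.tanh (π * t) - t / (1 / 4 + t ^ 2)) := by
  set x : ℂ := 1 / 2 - t * I
  have hx : x ∈ integerComplement :=
    mem_integerComplement_of_im_ne_zero (by simp [x, ht.ne'])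
  convert hasSum_im (hasSum_cotTerm hx) using 1
  · ext n
    have h₁ : x - (n + 1) = ((-((n : ℝ) + 1 / 2) : ℝ) : ℂ) - t * I := by push_cast; ring
    have h₂ : x + (n + 1) = ((((n + 1 : ℕ) : ℝ) + 1 / 2 : ℝ) : ℂ) - t * I := by push_cast; ring
    rw [add_im, h₁, h₂, one_div_sub_mul_I_im, one_div_sub_mul_I_im, neg_sq]
  · have hcot : π * x = π / 2 - (π * t : ℝ) * I := by push_cast; ring
    rw [sub_im, hcot, cot_pi_div_two_sub, tan_mul_I, ← ofReal_tanh,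
      show x = ((1 / 2 : ℝ) : ℂ) - t * I by push_cast; rfl, one_div_sub_mul_I_im]
    simp only [mul_im, ofReal_re, ofReal_im, I_re, I_im]
    norm_num

theorem tanh_partial_fraction (t : ℝ) (ht : 0 < t) :
    t / (1 / 4 + t ^ 2) + ∑' n : ℕ, t / (((n : ℝ) + 1 + 1 / 2) ^ 2 + t ^ 2)
      = (π / 2) * Real.tanh (π * t) := by
  have h := (hasSum_pi_mul_tanh t ht).succ_of_add_succ
    (f := fun n : ℕ ↦ t / (((n : ℝ) + 1 / 2) ^ 2 + t ^ 2)) (fun n ↦ by positivity)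
  have hf0 : t / ((((0 : ℕ) : ℝ) + 1 / 2) ^ 2 + t ^ 2) = t / (1 / 4 + t ^ 2) := by norm_num
  simp only [hf0, Nat.cast_add, Nat.cast_one] at h
  rw [h.tsum_eq]
  ring
end

section
/- For all σ' > 1/2 and T > 0, ∑_{k=0}^∞ |log(1 − iT/((k+σ')(k+σ'−1/2) + T² + iT/2))| ≤ C·T·∫_0^∞ dx/(x² + T²) = C·π/2 for some absolute constant C; in particular the sum is O(1) uniformly in T. -/
/-!
Writing `w = a + T² + iT/2` with `a = (k + σ')(k + σ' - 1/2) > 0`, one has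
`1 - iT/w = conj w / w`, whose logarithm is `-2i arg w`. Since `re w > 0`, the `k`-th term
`2|arg w|` is at most `min(π, 2|im w| / re w) ≤ min(π, T/(k² + T²))`. The term `k = 0` must be
bounded by `π`, since `a` is arbitrarily small as `σ' → 1/2`; the others are summed by the
integral test, `∑_{k ≥ 1} T/(k² + T²) ≤ ∫₀^∞ T/(x² + T²) dx = π/2`. Hence `C = 3` works.
-/

open Complex Real ComplexConjugate MeasureTheory Set Filter Topology

namespace Complex

theorem abs_arg_le_abs_im_div_re {z : ℂ} (hz : 0 < z.re) : |arg z| ≤ |z.im| / z.re := by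
  have hlt : |arg z| < π / 2 := abs_arg_lt_pi_div_two_iff.2 (Or.inl hz)
  rcases le_total 0 (arg z) with h | h
  · calc |arg z| = arg z := abs_of_nonneg h
      _ ≤ Real.tan (arg z) := Real.le_tan h (by rwa [abs_of_nonneg h] at hlt)
      _ = z.im / z.re := tan_arg z
      _ ≤ |z.im| / z.re := by gcongr; exact le_abs_self _
  · calc |arg z| = -arg z := abs_of_nonpos h
      _ ≤ Real.tan (-arg z) := Real.le_tan (neg_nonneg.2 h) (by rwa [abs_of_nonpos h] at hlt)
      _ = -z.im / z.re := by rw [Real.tan_neg, tan_arg, neg_div]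
      _ ≤ |z.im| / z.re := by gcongr; exact neg_le_abs _

theorem log_conj_div_self {z : ℂ} (hz : 0 < z.re) :
    log (conj z / z) = -(2 * arg z : ℝ) * I := by
  have harg := abs_lt.1 (abs_arg_lt_pi_div_two_iff.2 (Or.inl hz))
  have hz0 : z ≠ 0 := fun h => by simp [h] at hz
  have hexp : conj z / z = exp (-(2 * arg z : ℝ) * I) := by
    calc conj z / z = exp (conj (log z)) / exp (log z) := by
          rw [← log_conj z (by linarith [pi_pos]), exp_log (by simpa using hz0), exp_log hz0]
      _ = exp (conj (log z) - log z) := (exp_sub _ _).symm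
      _ = exp (-(2 * arg z : ℝ) * I) := by
          congr 1
          apply Complex.ext <;> simp [log_im]
          ring
  rw [hexp, log_exp] <;> simp <;> linarith

theorem one_sub_two_im_mul_I_div_self {z : ℂ} (hz : z ≠ 0) :
    1 - 2 * z.im * I / z = conj z / z := by
  rw [one_sub_div hz]
  congr 1
  apply Complex.ext <;> simp
  ring

theorem norm_log_one_sub_I_mul_div_le {b t : ℝ} (hb : 0 < b) :
    ‖log (1 - I * t / (b + I * t / 2))‖ ≤ min π (|t| / b) := by
  set z : ℂ := b + I * t / 2
  have hre : z.re = b := by simp [z]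
  have him : z.im = t / 2 := by simp [z]
  have hz : 0 < z.re := hre ▸ hb
  have hnum : I * t = 2 * z.im * I := by rw [him]; push_cast; ring
  rw [hnum, one_sub_two_im_mul_I_div_self (fun h => by simp [h] at hz), log_conj_div_self hz]
  rw [norm_mul, norm_I, mul_one, norm_neg, norm_real, Real.norm_eq_abs, abs_mul, abs_two]
  refine le_min ?_ ?_
  · linarith [abs_arg_le_pi_div_two_iff.2 hz.le]
  · calc 2 * |arg z| ≤ 2 * (|z.im| / z.re) := by gcongr; exact abs_arg_le_abs_im_div_re hz
      _ = |t| / b := by rw [him, hre, abs_div, abs_two]; ring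

end Complex

section Lorentzian

variable {T : ℝ} (hT : 0 < T)
include hT

theorem hasDerivAt_arctan_div (x : ℝ) :
    HasDerivAt (fun x => Real.arctan (x / T)) (T / (x ^ 2 + T ^ 2)) x := by
  convert ((hasDerivAt_id' x).div_const T).arctan using 1
  field_simp
  ring

theorem tendsto_arctan_div_atTop :
    Tendsto (fun x => Real.arctan (x / T)) atTop (𝓝 (π / 2)) :=
  tendsto_nhds_of_tendsto_nhdsWithin
    (tendsto_arctan_atTop.comp (tendsto_id.atTop_div_const hT))

theorem integrableOn_div_sq_add_sq_Ioi :
    IntegrableOn (fun x => T / (x ^ 2 + T ^ 2)) (Ioi 0) :=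
  integrableOn_Ioi_deriv_of_nonneg' (fun x _ => hasDerivAt_arctan_div hT x)
    (fun x _ => by positivity) (tendsto_arctan_div_atTop hT)

theorem integral_div_sq_add_sq_Ioi :
    ∫ x in Ioi (0 : ℝ), T / (x ^ 2 + T ^ 2) = π / 2 := by
  rw [integral_Ioi_of_hasDerivAt_of_tendsto' (fun x _ => hasDerivAt_arctan_div hT x)
    (integrableOn_div_sq_add_sq_Ioi hT) (tendsto_arctan_div_atTop hT)]
  simp

theorem antitoneOn_div_sq_add_sq : AntitoneOn (fun x : ℝ => T / (x ^ 2 + T ^ 2)) (Ici 0) :=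
  fun x hx y _ hxy => by
    dsimp only
    gcongr

theorem summable_div_succ_sq_add_sq :
    Summable (fun n : ℕ => T / (((n + 1 : ℕ) : ℝ) ^ 2 + T ^ 2)) :=
  (summable_nat_add_iff 1).2 <| (antitoneOn_div_sq_add_sq hT).summable_of_integrableOn_Ioi_zero
    (integrableOn_div_sq_add_sq_Ioi hT) (fun _ _ => by positivity)

theorem tsum_div_succ_sq_add_sq_le :
    ∑' n : ℕ, T / (((n + 1 : ℕ) : ℝ) ^ 2 + T ^ 2) ≤ π / 2 :=
  integral_div_sq_add_sq_Ioi hT ▸ (antitoneOn_div_sq_add_sq hT).tsum_add_one_le_integral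
    (integrableOn_div_sq_add_sq_Ioi hT) (fun _ _ => by positivity)

end Lorentzian

theorem tsum_norm_log_one_sub_I_mul_div_le {σ T : ℝ} (hσ : 1 / 2 < σ) (hT : 0 < T) :
    ∑' k : ℕ, ‖Complex.log (1 - I * T / (((k : ℂ) + σ) * ((k : ℂ) + σ - 1 / 2)
      + (T : ℂ) ^ 2 + I * T / 2))‖ ≤ π + π / 2 := by
  set f : ℕ → ℝ := fun k => ‖Complex.log (1 - I * T / (((k : ℂ) + σ) * ((k : ℂ) + σ - 1 / 2)
      + (T : ℂ) ^ 2 + I * T / 2))‖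
  have hf : ∀ k : ℕ, f k ≤ min π (T / ((k : ℝ) ^ 2 + T ^ 2)) := by
    intro k
    have hk : (k : ℝ) ^ 2 ≤ (k + σ) * (k + σ - 1 / 2) := by nlinarith [k.cast_nonneg (α := ℝ)]
    have h := norm_log_one_sub_I_mul_div_le (b := (k + σ) * (k + σ - 1 / 2) + T ^ 2) (t := T)
      (by nlinarith)
    push_cast at h
    rw [abs_of_pos hT] at h
    refine h.trans (min_le_min le_rfl ?_)
    gcongr
  have hsucc : ∀ k : ℕ, f (k + 1) ≤ T / (((k + 1 : ℕ) : ℝ) ^ 2 + T ^ 2) :=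
    fun k => (hf (k + 1)).trans (min_le_right _ _)
  have hsummable : Summable (fun k => f (k + 1)) :=
    (summable_div_succ_sq_add_sq hT).of_nonneg_of_le (fun _ => norm_nonneg _) hsucc
  rw [tsum_eq_zero_add' hsummable]
  gcongr
  · exact (hf 0).trans (min_le_left _ _)
  · exact (hsummable.tsum_le_tsum hsucc (summable_div_succ_sq_add_sq hT)).trans
      (tsum_div_succ_sq_add_sq_le hT)

theorem log_sum_bound :
    ∃ C : ℝ, 0 < C ∧ ∀ σ' : ℝ, 1 / 2 < σ' → ∀ T : ℝ, 0 < T →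
      (∑' k : ℕ, ‖Complex.log (1 - Complex.I * (T : ℂ) /
          (((k : ℂ) + (σ' : ℂ)) * ((k : ℂ) + (σ' : ℂ) - 1 / 2)
            + (T : ℂ) ^ 2 + Complex.I * (T : ℂ) / 2))‖)
        ≤ C * T * ∫ x in Set.Ioi (0 : ℝ), 1 / (x ^ 2 + T ^ 2) ∧
      C * T * (∫ x in Set.Ioi (0 : ℝ), 1 / (x ^ 2 + T ^ 2)) = C * (π / 2) := by
  refine ⟨3, by norm_num, fun σ' hσ' T hT => ?_⟩
  have hintegral : T * ∫ x in Ioi (0 : ℝ), 1 / (x ^ 2 + T ^ 2) = π / 2 := by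
    rw [← integral_const_mul, ← integral_div_sq_add_sq_Ioi hT]
    simp only [mul_one_div]
  rw [mul_assoc, hintegral]
  refine ⟨?_, rfl⟩
  linarith [tsum_norm_log_one_sub_I_mul_div_le hσ' hT]
end
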